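/- The ℂ-span of {Δ_M : M a perfect matching on {1,...,2n}} equals the ℂ-span of {Δ_M : M a noncrossing perfect matching on {1,...,2n}}, as subspaces of the polynomial ring ℂ[x]. -/

import Mathlib

open MvPolynomial Finset

noncomputable section

/-- The polynomial ring ℂ[x_{ij}] for a 2 × (2n) matrix of indeterminates. -/
abbrev PolyR (n : ℕ) := MvPolynomial (Fin 2 × Fin (2 * n)) ℂ

/-- The 2×2 minor Δ_{ab} = x_{1a} x_{2b} - x_{1b} x_{2a} (rows 0,1 in 0-indexing). -/
def Delta {n : ℕ} (a b : Fin (2 * n)) : PolyR n :=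
  X (0, a) * X (1, b) - X (0, b) * X (1, a)

/-- A perfect matching on {1,…,2n}, encoded as a fixed-point-free involution. -/
structure PM (n : ℕ) where
  f : Fin (2 * n) → Fin (2 * n)
  invol : ∀ i, f (f i) = i
  nofix : ∀ i, f i ≠ i

/-- The product Δ_M of the minors over the blocks of a perfect matching M. -/
def DeltaM {n : ℕ} (M : PM n) : PolyR n :=
  ∏ i ∈ Finset.univ.filter (fun i => i < M.f i), Delta i (M.f i)

/-- M is noncrossing: no a < b < c < d with a ∼ c and b ∼ d. -/
def Noncrossing {n : ℕ} (M : PM n) : Prop :=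
  ¬ ∃ a b c d : Fin (2 * n), a < b ∧ b < c ∧ c < d ∧ M.f a = c ∧ M.f b = d

/-- The number of crossing pairs a < b < c < d with a ∼ c, b ∼ d in M. -/
def crossings {n : ℕ} (M : PM n) : ℕ :=
  ((Finset.univ : Finset (Fin (2 * n) × Fin (2 * n))).filter
    (fun p => p.1 < p.2 ∧ p.2 < M.f p.1 ∧ M.f p.1 < M.f p.2)).card

/-! If `M` has a crossing `a < b < c < d` with `a ∼ c`, `b ∼ d`, the three-term Plücker relation
`Δ_ac Δ_bd = Δ_ab Δ_cd + Δ_ad Δ_bc` writes `Δ_M` as the sum of `Δ` over the two matchings that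
re-pair these four points as `{a,b},{c,d}` and `{a,d},{b,c}`. Both have strictly smaller potential
`∑ ℓ (2n - ℓ)` over their blocks (`ℓ` the length of a block), since `ℓ ↦ ℓ (2n - ℓ)` is strictly
concave, so induction on the potential ends at noncrossing matchings. -/

def arcWeight (N ℓ : ℕ) : ℕ := ℓ * (N - ℓ)

theorem arcWeight_add_lt_aligned {N A B C D : ℕ} (hAB : A < B) (hBC : B < C) (hCD : C < D)
    (hD : D < N) :
    arcWeight N (B - A) + arcWeight N (D - C) < arcWeight N (C - A) + arcWeight N (D - B) := by
  unfold arcWeight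
  zify [hAB.le, hCD.le, (hAB.trans hBC).le, (hBC.trans hCD).le, show B - A ≤ N by omega,
    show D - C ≤ N by omega, show C - A ≤ N by omega, show D - B ≤ N by omega]
  have hq : (0 : ℤ) < C - B := by omega
  have hN : (0 : ℤ) < N - (D - A) := by omega
  nlinarith [mul_pos hq hN]

theorem arcWeight_add_lt_nested {N A B C D : ℕ} (hAB : A < B) (hBC : B < C) (hCD : C < D)
    (hD : D ≤ N) :
    arcWeight N (D - A) + arcWeight N (C - B) < arcWeight N (C - A) + arcWeight N (D - B) := by
  unfold arcWeight
  zify [(hAB.trans (hBC.trans hCD)).le, hBC.le, (hAB.trans hBC).le, (hBC.trans hCD).le,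
    show D - A ≤ N by omega, show C - B ≤ N by omega, show C - A ≤ N by omega,
    show D - B ≤ N by omega]
  have hp : (0 : ℤ) < B - A := by omega
  have hr : (0 : ℤ) < D - C := by omega
  nlinarith [mul_pos hp hr]

theorem Delta_mul_Delta {n : ℕ} (a b c d : Fin (2 * n)) :
    Delta a c * Delta b d = Delta a b * Delta c d + Delta a d * Delta b c := by
  unfold Delta
  ring

namespace PM

variable {n : ℕ}

def relabel (M : PM n) (σ : Equiv.Perm (Fin (2 * n))) : PM n where
  f := σ ∘ M.f ∘ σ.symm
  invol i := by simp [M.invol]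
  nofix i h := M.nofix (σ.symm i) (by simpa [Equiv.eq_symm_apply] using h)

theorem relabel_swap_apply_of_ne (M : PM n) {x y i : Fin (2 * n)} (hx : i ≠ x) (hy : i ≠ y)
    (hMx : i ≠ M.f x) (hMy : i ≠ M.f y) : (M.relabel (Equiv.swap x y)).f i = M.f i := by
  have hfx : M.f i ≠ x := fun h => hMx (by rw [← h, M.invol])
  have hfy : M.f i ≠ y := fun h => hMy (by rw [← h, M.invol])
  simp [relabel, Equiv.swap_apply_of_ne_of_ne, hx, hy, hfx, hfy]

section Blocks

variable {β : Type*} [CommMonoid β]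

@[to_additive blockSummand]
def blockFactor (M : PM n) (g : Fin (2 * n) → Fin (2 * n) → β) (i : Fin (2 * n)) : β :=
  if i < M.f i then g i (M.f i) else 1

@[to_additive]
def blockProd (M : PM n) (g : Fin (2 * n) → Fin (2 * n) → β) : β :=
  ∏ i, M.blockFactor g i

@[to_additive]
theorem blockProd_eq_of_blocks (M : PM n) (g : Fin (2 * n) → Fin (2 * n) → β)
    {p q r s : Fin (2 * n)} (hpq : p < q) (hrs : r < s) (hpr : p ≠ r)
    (hp : M.f p = q) (hr : M.f r = s) :
    M.blockProd g = g p q * g r s * ∏ i ∈ ({p, q, r, s} : Finset _)ᶜ, M.blockFactor g i := by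
  have hq : M.f q = p := by rw [← hp, M.invol]
  have hs : M.f s = r := by rw [← hr, M.invol]
  have hqs : q ≠ s := fun h => hpr (by rw [← hq, h, hs])
  have hqr : q ≠ r := by rintro rfl; exact (hpq.trans hrs).ne (hq.symm.trans hr)
  have hps : p ≠ s := by
    rintro rfl
    obtain rfl : q = r := hp.symm.trans hs
    exact lt_asymm hpq hrs
  rw [blockProd, ← Finset.prod_mul_prod_compl {p, q, r, s}]
  congr 1
  rw [Finset.prod_insert (by simp [hpq.ne, hpr, hps]), Finset.prod_insert (by simp [hqr, hqs]),
    Finset.prod_pair hrs.ne]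
  simp [blockFactor, hp, hq, hr, hs, hpq, hrs, hpq.not_gt, hrs.not_gt]

@[to_additive sum_compl_blockSummand_relabel_swap]
theorem prod_compl_blockFactor_relabel_swap (M : PM n) (g : Fin (2 * n) → Fin (2 * n) → β)
    {x y : Fin (2 * n)} {T : Finset (Fin (2 * n))} (hx : x ∈ T) (hy : y ∈ T) (hMx : M.f x ∈ T)
    (hMy : M.f y ∈ T) :
    ∏ i ∈ Tᶜ, (M.relabel (Equiv.swap x y)).blockFactor g i = ∏ i ∈ Tᶜ, M.blockFactor g i := by
  refine Finset.prod_congr rfl fun i hi => ?_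
  have hiT : i ∉ T := Finset.mem_compl.mp hi
  have hne {j : Fin (2 * n)} (hj : j ∈ T) : i ≠ j := fun h => hiT (h ▸ hj)
  simp only [blockFactor, relabel_swap_apply_of_ne M (hne hx) (hne hy) (hne hMx) (hne hMy)]

variable (M : PM n) (g : Fin (2 * n) → Fin (2 * n) → β) {a b c d : Fin (2 * n)}
  (hab : a < b) (hbc : b < c) (hcd : c < d) (hac : M.f a = c) (hbd : M.f b = d)
include hab hbc hcd hac hbd

@[to_additive]
theorem blockProd_eq_of_crossing :
    M.blockProd g = g a c * g b d * ∏ i ∈ ({a, b, c, d} : Finset _)ᶜ, M.blockFactor g i := by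
  rw [blockProd_eq_of_blocks M g (hab.trans hbc) (hbc.trans hcd) hab.ne hac hbd,
    Finset.insert_comm c b]

@[to_additive]
theorem blockProd_relabel_swap_of_crossing_aligned :
    (M.relabel (Equiv.swap b c)).blockProd g =
      g a b * g c d * ∏ i ∈ ({a, b, c, d} : Finset _)ᶜ, M.blockFactor g i := by
  have hca : M.f c = a := by rw [← hac, M.invol]
  have ha : (M.relabel (Equiv.swap b c)).f a = b := by
    simp [relabel, Equiv.swap_apply_of_ne_of_ne hab.ne (hab.trans hbc).ne, hac]
  have hc : (M.relabel (Equiv.swap b c)).f c = d := by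
    simp [relabel, hbd, Equiv.swap_apply_of_ne_of_ne (hbc.trans hcd).ne' hcd.ne']
  rw [blockProd_eq_of_blocks _ g hab hcd (hab.trans hbc).ne ha hc,
    prod_compl_blockFactor_relabel_swap M g (by simp) (by simp) (by simp [hbd]) (by simp [hca])]

@[to_additive]
theorem blockProd_relabel_swap_of_crossing_nested :
    (M.relabel (Equiv.swap c d)).blockProd g =
      g a d * g b c * ∏ i ∈ ({a, b, c, d} : Finset _)ᶜ, M.blockFactor g i := by
  have hca : M.f c = a := by rw [← hac, M.invol]
  have hdb : M.f d = b := by rw [← hbd, M.invol]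
  have ha : (M.relabel (Equiv.swap c d)).f a = d := by
    simp [relabel, Equiv.swap_apply_of_ne_of_ne (hab.trans hbc).ne (hab.trans (hbc.trans hcd)).ne,
      hac]
  have hb : (M.relabel (Equiv.swap c d)).f b = c := by
    simp [relabel, Equiv.swap_apply_of_ne_of_ne hbc.ne (hbc.trans hcd).ne, hbd]
  rw [blockProd_eq_of_blocks _ g (hab.trans (hbc.trans hcd)) hbc hab.ne ha hb,
    prod_compl_blockFactor_relabel_swap M g (by simp) (by simp) (by simp [hca]) (by simp [hdb]),
    Finset.insert_comm d b, Finset.pair_comm d c]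

end Blocks

theorem DeltaM_eq_blockProd (M : PM n) : DeltaM M = M.blockProd Delta :=
  Finset.prod_filter _ _

def potential (M : PM n) : ℕ :=
  M.blockSum fun i j => arcWeight (2 * n) (j - i)

section Crossing

variable (M : PM n) {a b c d : Fin (2 * n)}
  (hab : a < b) (hbc : b < c) (hcd : c < d) (hac : M.f a = c) (hbd : M.f b = d)
include hab hbc hcd hac hbd

theorem DeltaM_eq_add_of_crossing :
    DeltaM M = DeltaM (M.relabel (Equiv.swap b c)) + DeltaM (M.relabel (Equiv.swap c d)) := by
  rw [DeltaM_eq_blockProd, DeltaM_eq_blockProd, DeltaM_eq_blockProd,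
    blockProd_eq_of_crossing M Delta hab hbc hcd hac hbd,
    blockProd_relabel_swap_of_crossing_aligned M Delta hab hbc hcd hac hbd,
    blockProd_relabel_swap_of_crossing_nested M Delta hab hbc hcd hac hbd, Delta_mul_Delta, add_mul]

theorem potential_relabel_swap_lt_aligned :
    (M.relabel (Equiv.swap b c)).potential < M.potential := by
  rw [potential, potential, blockSum_eq_of_crossing M _ hab hbc hcd hac hbd,
    blockSum_relabel_swap_of_crossing_aligned M _ hab hbc hcd hac hbd]
  exact Nat.add_lt_add_right (arcWeight_add_lt_aligned hab hbc hcd d.isLt) _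

theorem potential_relabel_swap_lt_nested :
    (M.relabel (Equiv.swap c d)).potential < M.potential := by
  rw [potential, potential, blockSum_eq_of_crossing M _ hab hbc hcd hac hbd,
    blockSum_relabel_swap_of_crossing_nested M _ hab hbc hcd hac hbd]
  exact Nat.add_lt_add_right (arcWeight_add_lt_nested hab hbc hcd d.isLt.le) _

end Crossing

theorem DeltaM_mem_span_noncrossing (M : PM n) :
    DeltaM M ∈ Submodule.span ℂ {p : PolyR n | ∃ M : PM n, Noncrossing M ∧ DeltaM M = p} := by
  induction h : M.potential using Nat.strong_induction_on generalizing M with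
  | _ k ih =>
    by_cases hM : Noncrossing M
    · exact Submodule.subset_span ⟨M, hM, rfl⟩
    obtain ⟨a, b, c, d, hab, hbc, hcd, hac, hbd⟩ := not_not.mp hM
    rw [DeltaM_eq_add_of_crossing M hab hbc hcd hac hbd]
    exact Submodule.add_mem _
      (ih _ (h ▸ potential_relabel_swap_lt_aligned M hab hbc hcd hac hbd) _ rfl)
      (ih _ (h ▸ potential_relabel_swap_lt_nested M hab hbc hcd hac hbd) _ rfl)

end PM

theorem span_all_matchings_eq_span_noncrossing (n : ℕ) :
    Submodule.span ℂ {p : PolyR n | ∃ M : PM n, DeltaM M = p} =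
      Submodule.span ℂ {p : PolyR n | ∃ M : PM n, Noncrossing M ∧ DeltaM M = p} := by
  refine le_antisymm ?_ (Submodule.span_mono fun _ ⟨M, _, hM⟩ => ⟨M, hM⟩)
  rw [Submodule.span_le]
  rintro _ ⟨M, rfl⟩
  exact M.DeltaM_mem_span_noncrossing
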